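/- arXiv:1707.08742 — 2 statements merged into one kernel-verified Lean document; each statement's English description precedes it below -/
import Mathlib

section
/- (Characteristic formulae for worlds) Let P be a finite set of atomic propositions. For every world-pointed inquisitive modal model M,w over P and every n ∈ ℕ there exists an InqML formula χ^n_{M,w} of modal depth at most n such that for every world-pointed inquisitive modal model M',w' over P: M',w' ⊨ χ^n_{M,w} if and only if M',w' ~^n M,w. -/
/-- Formulas of inquisitive modal logic InqML over atomic propositions `P`. -/
inductive InqForm (P : Type) : Type
  | atom : P → InqForm P
  | bot : InqForm P
  | and : InqForm P → InqForm P → InqForm P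
  | impl : InqForm P → InqForm P → InqForm P
  | idisj : InqForm P → InqForm P → InqForm P
  | box : InqForm P → InqForm P
  | boxplus : InqForm P → InqForm P

/-- An inquisitive modal model `M = ⟨W, Σ, V⟩`. -/
structure InqModel (P : Type) where
  W : Type
  Sig : W → Set (Set W)
  Sig_nonempty : ∀ w, (Sig w).Nonempty
  Sig_downward : ∀ w, ∀ s ∈ Sig w, ∀ t ⊆ s, t ∈ Sig w
  V : P → Set W

/-- `σ(w) = ⋃ Σ(w)`. -/
def InqModel.sigma {P : Type} (M : InqModel P) (w : M.W) : Set M.W :=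
  ⋃₀ M.Sig w

/-- Support of a formula at an information state `s ⊆ W`. -/
def support {P : Type} (M : InqModel P) : InqForm P → Set M.W → Prop
  | .atom p, s => s ⊆ M.V p
  | .bot, s => s = ∅
  | .and φ ψ, s => support M φ s ∧ support M ψ s
  | .impl φ ψ, s => ∀ t ⊆ s, support M φ t → support M ψ t
  | .idisj φ ψ, s => support M φ s ∨ support M ψ s
  | .box φ, s => ∀ w ∈ s, support M φ (M.sigma w)
  | .boxplus φ, s => ∀ w ∈ s, ∀ t ∈ M.Sig w, support M φ t

/-- Truth at a world: `M,w ⊨ φ` iff `M,{w} ⊨ φ`. -/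
def truth {P : Type} (M : InqModel P) (w : M.W) (φ : InqForm P) : Prop :=
  support M φ {w}

/-- Modal depth: maximal nesting depth of `□` and `⊞`. -/
def mdepth {P : Type} : InqForm P → ℕ
  | .atom _ => 0
  | .bot => 0
  | .and φ ψ => max (mdepth φ) (mdepth ψ)
  | .impl φ ψ => max (mdepth φ) (mdepth ψ)
  | .idisj φ ψ => max (mdepth φ) (mdepth ψ)
  | .box φ => mdepth φ + 1
  | .boxplus φ => mdepth φ + 1

/-- Lift of a relation between worlds to sets of worlds: every world on either
side is related to some world on the other side. -/
def StateRel {W W' : Type} (Z : W → W' → Prop) (s : Set W) (s' : Set W') : Prop :=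
  (∀ w ∈ s, ∃ w' ∈ s', Z w w') ∧ (∀ w' ∈ s', ∃ w ∈ s, Z w w')

/-- `n`-bisimilarity between worlds of two inquisitive modal models. -/
def NBisimW {P : Type} (M M' : InqModel P) : ℕ → M.W → M'.W → Prop
  | 0, w, w' => ∀ p : P, w ∈ M.V p ↔ w' ∈ M'.V p
  | n + 1, w, w' => (∀ p : P, w ∈ M.V p ↔ w' ∈ M'.V p) ∧
      (∀ s ∈ M.Sig w, ∃ s' ∈ M'.Sig w', StateRel (NBisimW M M' n) s s') ∧
      (∀ s' ∈ M'.Sig w', ∃ s ∈ M.Sig w, StateRel (NBisimW M M' n) s s')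

/-- `n`-bisimilarity between information states. -/
def NBisimS {P : Type} (M M' : InqModel P) (n : ℕ) (s : Set M.W) (s' : Set M'.W) : Prop :=
  StateRel (NBisimW M M' n) s s'

/-- `Z` is a bisimulation between two inquisitive modal models. -/
def IsBisimulation {P : Type} (M M' : InqModel P) (Z : M.W → M'.W → Prop) : Prop :=
  ∀ w w', Z w w' →
    (∀ p : P, w ∈ M.V p ↔ w' ∈ M'.V p) ∧
    (∀ s ∈ M.Sig w, ∃ s' ∈ M'.Sig w', StateRel Z s s') ∧
    (∀ s' ∈ M'.Sig w', ∃ s ∈ M.Sig w, StateRel Z s s')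

/-- Bisimilarity of worlds: inclusion in some bisimulation. -/
def BisimW {P : Type} (M M' : InqModel P) (w : M.W) (w' : M'.W) : Prop :=
  ∃ Z, IsBisimulation M M' Z ∧ Z w w'

/-- Bisimilarity of information states. -/
def BisimS {P : Type} (M M' : InqModel P) (s : Set M.W) (s' : Set M'.W) : Prop :=
  StateRel (BisimW M M') s s'

/-!
Worlds are classified up to `~^n` by their `n`-types: the set of atoms they satisfy and,
for `n + 1`, the family of sets of `n`-types realised by the states of `Σ(w)`. Since `P` is
finite there are finitely many `n`-types, and each one is defined by a formula of depth `n`.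
Inductively, with `χ_x` defining the `n`-type `x`, the `(n+1)`-type `(A, 𝒮)` is defined by the
atoms `A` together with `⊞ ⩾_{T ∈ 𝒮} ¬¬ ⩾_{x ∈ T} χ_x` (every state of `Σ(w)` has its types
inside some `T ∈ 𝒮`) and, for each nonempty `T ∈ 𝒮`, `¬ ⊞ ⩾_{x ∈ T} ¬ χ_x` (some state of `Σ(w)`
realises all of `T`). Because both `Σ(w)` and `𝒮` are downward closed, these two inclusions
pin down `𝒮` exactly. Flatness of `¬` (persistence of support) makes `¬¬φ` and `¬φ` behave
classically world by world.
-/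

variable {P : Type}

namespace InqForm

def neg (φ : InqForm P) : InqForm P := φ.impl .bot

def top : InqForm P := bot.neg

noncomputable def iConj {α : Type} (S : Set α) [Finite S] (f : α → InqForm P) : InqForm P :=
  (S.toFinite.toFinset.toList.map f).foldr .and top

noncomputable def iIdisj {α : Type} (S : Set α) [Finite S] (f : α → InqForm P) : InqForm P :=
  (S.toFinite.toFinset.toList.map f).foldr .idisj bot

end InqForm

open InqForm

section Support

variable (M : InqModel P)

theorem support_of_subset {φ : InqForm P} {s t : Set M.W} (h : support M φ s) (hts : t ⊆ s) :
    support M φ t := by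
  induction φ generalizing s t with
  | atom p => exact hts.trans h
  | bot => exact Set.subset_eq_empty hts h
  | and φ ψ ihφ ihψ => exact ⟨ihφ h.1 hts, ihψ h.2 hts⟩
  | impl φ ψ _ _ => exact fun u hu => h u (hu.trans hts)
  | idisj φ ψ ihφ ihψ => exact h.imp (ihφ · hts) (ihψ · hts)
  | box φ _ => exact fun w hw => h w (hts hw)
  | boxplus φ _ => exact fun w hw => h w (hts hw)

theorem support_neg (φ : InqForm P) (s : Set M.W) :
    support M φ.neg s ↔ ∀ w ∈ s, ¬ truth M w φ := by
  constructor
  · intro h w hw hφ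
    exact Set.singleton_ne_empty w (h {w} (Set.singleton_subset_iff.2 hw) hφ)
  · intro h t hts hφ
    by_contra hne
    obtain ⟨v, hv⟩ := Set.nonempty_iff_ne_empty.2 hne
    exact h v (hts hv) (support_of_subset M hφ (Set.singleton_subset_iff.2 hv))

theorem truth_neg (w : M.W) (φ : InqForm P) : truth M w φ.neg ↔ ¬ truth M w φ := by
  simp [truth, support_neg]

theorem support_neg_neg (φ : InqForm P) (s : Set M.W) :
    support M φ.neg.neg s ↔ ∀ w ∈ s, truth M w φ := by
  simp [support_neg, truth_neg]

theorem truth_and (w : M.W) (φ ψ : InqForm P) :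
    truth M w (φ.and ψ) ↔ truth M w φ ∧ truth M w ψ :=
  Iff.rfl

theorem truth_boxplus (w : M.W) (φ : InqForm P) :
    truth M w φ.boxplus ↔ ∀ t ∈ M.Sig w, support M φ t := by
  simp [truth, support]

theorem support_top (s : Set M.W) : support M top s :=
  fun _ _ h => h

theorem support_iConj {α : Type} (S : Set α) [Finite S] (f : α → InqForm P) (s : Set M.W) :
    support M (iConj S f) s ↔ ∀ a ∈ S, support M (f a) s := by
  suffices ∀ l : List (InqForm P), support M (l.foldr .and top) s ↔ ∀ φ ∈ l, support M φ s by
    simp [iConj, this]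
  intro l
  induction l with
  | nil => simp [support_top]
  | cons φ l ih => simp [support, ih]

theorem support_iIdisj {α : Type} (S : Set α) [Finite S] (f : α → InqForm P) (s : Set M.W) :
    support M (iIdisj S f) s ↔ s = ∅ ∨ ∃ a ∈ S, support M (f a) s := by
  suffices ∀ l : List (InqForm P),
      support M (l.foldr .idisj bot) s ↔ s = ∅ ∨ ∃ φ ∈ l, support M φ s by
    simp [iIdisj, this]
  intro l
  induction l with
  | nil => simp [support]
  | cons φ l ih => simp [support, ih, or_left_comm]

theorem truth_iIdisj {α : Type} (S : Set α) [Finite S] (f : α → InqForm P) (w : M.W) :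
    truth M w (iIdisj S f) ↔ ∃ a ∈ S, truth M w (f a) := by
  simp [truth, support_iIdisj]

end Support

section Depth

@[simp]
theorem mdepth_neg (φ : InqForm P) : mdepth φ.neg = mdepth φ := by
  simp [InqForm.neg, mdepth]

@[simp]
theorem mdepth_iConj_le_iff {α : Type} (S : Set α) [Finite S] (f : α → InqForm P) (n : ℕ) :
    mdepth (iConj S f) ≤ n ↔ ∀ a ∈ S, mdepth (f a) ≤ n := by
  suffices ∀ l : List (InqForm P), mdepth (l.foldr .and top) ≤ n ↔ ∀ φ ∈ l, mdepth φ ≤ n by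
    simp [iConj, this]
  intro l
  induction l with
  | nil => simp [InqForm.top, mdepth]
  | cons φ l ih => simp [mdepth, ih]

@[simp]
theorem mdepth_iIdisj_le_iff {α : Type} (S : Set α) [Finite S] (f : α → InqForm P) (n : ℕ) :
    mdepth (iIdisj S f) ≤ n ↔ ∀ a ∈ S, mdepth (f a) ≤ n := by
  suffices ∀ l : List (InqForm P), mdepth (l.foldr .idisj bot) ≤ n ↔ ∀ φ ∈ l, mdepth φ ≤ n by
    simp [iIdisj, this]
  intro l
  induction l with
  | nil => simp [mdepth]
  | cons φ l ih => simp [mdepth, ih]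

end Depth

section Types

theorem stateRel_iff_image_eq {W W' X : Type} {Z : W → W' → Prop} {f : W → X} {g : W' → X}
    (hZ : ∀ w w', Z w w' ↔ f w = g w') (s : Set W) (s' : Set W') :
    StateRel Z s s' ↔ f '' s = g '' s' := by
  constructor
  · rintro ⟨h, h'⟩
    refine Set.Subset.antisymm ?_ ?_
    · rintro _ ⟨v, hv, rfl⟩
      obtain ⟨v', hv', hvv'⟩ := h v hv
      exact ⟨v', hv', ((hZ v v').1 hvv').symm⟩
    · rintro _ ⟨v', hv', rfl⟩
      obtain ⟨v, hv, hvv'⟩ := h' v' hv'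
      exact ⟨v, hv, (hZ v v').1 hvv'⟩
  · intro h
    refine ⟨fun v hv => ?_, fun v' hv' => ?_⟩
    · obtain ⟨v', hv', he⟩ := h ▸ Set.mem_image_of_mem f hv
      exact ⟨v', hv', (hZ v v').2 he.symm⟩
    · obtain ⟨v, hv, he⟩ := h.symm ▸ Set.mem_image_of_mem g hv'
      exact ⟨v, hv, (hZ v v').2 he⟩

def InqType (P : Type) : ℕ → Type
  | 0 => Set P
  | n + 1 => Set P × Set (Set (InqType P n))

instance InqType.finite [Finite P] : ∀ n, Finite (InqType P n)
  | 0 => inferInstanceAs (Finite (Set P))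
  | n + 1 =>
    have := InqType.finite n
    inferInstanceAs (Finite (Set P × Set (Set (InqType P n))))

def InqModel.typeOf (M : InqModel P) : (n : ℕ) → M.W → InqType P n
  | 0, w => {p | w ∈ M.V p}
  | n + 1, w => ({p | w ∈ M.V p}, Set.image (M.typeOf n) '' M.Sig w)

theorem nbisimW_iff_typeOf_eq (M M' : InqModel P) (n : ℕ) (w : M.W) (w' : M'.W) :
    NBisimW M M' n w w' ↔ M.typeOf n w = M'.typeOf n w' := by
  induction n generalizing w w' with
  | zero => exact Set.ext_iff.symm
  | succ n ih =>
    change _ ↔ (({p | w ∈ M.V p}, _) : Set P × Set (Set (InqType P n))) = ({p | w' ∈ M'.V p}, _)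
    rw [Prod.mk.injEq]
    exact and_congr Set.ext_iff.symm
      (stateRel_iff_image_eq (stateRel_iff_image_eq ih) (M.Sig w) (M'.Sig w'))

end Types

theorem image_image_subset_iff {W W' X : Type} {f : W → X} {g : W' → X} {F : Set (Set W)}
    {F' : Set (Set W')} (hF' : IsLowerSet F') :
    Set.image f '' F ⊆ Set.image g '' F' ↔ ∀ s ∈ F, ∃ s' ∈ F', f '' s ⊆ g '' s' := by
  refine ⟨fun h s hs => ?_, fun h => ?_⟩
  · obtain ⟨s', hs', he⟩ := h (Set.mem_image_of_mem _ hs)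
    exact ⟨s', hs', he.ge⟩
  · rintro _ ⟨s, hs, rfl⟩
    obtain ⟨s', hs', hss'⟩ := h s hs
    obtain ⟨u, hus', hu⟩ := Set.subset_image_iff.1 hss'
    exact ⟨u, hF' hus' hs', hu⟩

theorem image_image_eq_iff {W W' X : Type} {f : W → X} {g : W' → X} {F : Set (Set W)}
    {F' : Set (Set W')} (hF : IsLowerSet F) (hF' : IsLowerSet F') :
    Set.image f '' F = Set.image g '' F' ↔
      (∀ s ∈ F, ∃ s' ∈ F', f '' s ⊆ g '' s') ∧ ∀ s' ∈ F', ∃ s ∈ F, g '' s' ⊆ f '' s := by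
  rw [Set.Subset.antisymm_iff, image_image_subset_iff hF', image_image_subset_iff hF]

theorem InqModel.isLowerSet_Sig (M : InqModel P) (w : M.W) : IsLowerSet (M.Sig w) :=
  fun s t hts hs => M.Sig_downward w s hs t hts

section Cover

variable {X : Type} [Finite X] (M : InqModel P) {f : M.W → X} {χ : X → InqForm P}

noncomputable def boxCover (S : Set (Set X)) (χ : X → InqForm P) : InqForm P :=
  .boxplus (iIdisj S fun T => (iIdisj T χ).neg.neg)

noncomputable def diamondCover (S : Set (Set X)) (χ : X → InqForm P) : InqForm P :=
  iConj {T ∈ S | T.Nonempty} fun T => (InqForm.boxplus (iIdisj T fun x => (χ x).neg)).neg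

theorem support_neg_neg_iIdisj_iff {T : Set X} (hT : ∀ x ∈ T, ∀ v, truth M v (χ x) ↔ f v = x)
    (s : Set M.W) : support M (iIdisj T χ).neg.neg s ↔ f '' s ⊆ T := by
  rw [support_neg_neg, Set.image_subset_iff]
  refine forall₂_congr fun v _ => ?_
  rw [truth_iIdisj]
  constructor
  · rintro ⟨x, hx, h⟩
    rwa [Set.mem_preimage, (hT x hx v).1 h]
  · exact fun h => ⟨f v, h, (hT _ h v).2 rfl⟩

theorem support_iIdisj_neg_iff {T : Set X} (hne : T.Nonempty)
    (hT : ∀ x ∈ T, ∀ v, truth M v (χ x) ↔ f v = x) (s : Set M.W) :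
    support M (iIdisj T fun x => (χ x).neg) s ↔ ¬ T ⊆ f '' s := by
  have hneg : ∀ x ∈ T, support M (χ x).neg s ↔ x ∉ f '' s := fun x hx => by
    simp [support_neg, hT x hx]
  rw [support_iIdisj, Set.not_subset]
  constructor
  · rintro (rfl | ⟨x, hx, h⟩)
    · obtain ⟨x, hx⟩ := hne
      exact ⟨x, hx, by simp⟩
    · exact ⟨x, hx, (hneg x hx).1 h⟩
  · rintro ⟨x, hx, h⟩
    exact Or.inr ⟨x, hx, (hneg x hx).2 h⟩

variable {S : Set (Set X)} (hχ : ∀ T ∈ S, ∀ x ∈ T, ∀ v, truth M v (χ x) ↔ f v = x)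
include hχ

theorem truth_boxCover_iff (hS : S.Nonempty) (w : M.W) :
    truth M w (boxCover S χ) ↔ ∀ t ∈ M.Sig w, ∃ T ∈ S, f '' t ⊆ T := by
  rw [boxCover, truth_boxplus]
  refine forall₂_congr fun t _ => ?_
  have hcover (T) (hT : T ∈ S) := support_neg_neg_iIdisj_iff M (hχ T hT)
  rw [support_iIdisj]
  refine (or_iff_right_of_imp ?_).trans
    (exists_congr fun T => and_congr_right fun hT => hcover T hT t)
  rintro rfl
  obtain ⟨T, hT⟩ := hS
  exact ⟨T, hT, (hcover T hT ∅).2 (by simp)⟩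

theorem truth_diamondCover_iff (w : M.W) :
    truth M w (diamondCover S χ) ↔ ∀ T ∈ S, ∃ t ∈ M.Sig w, T ⊆ f '' t := by
  rw [diamondCover, truth, support_iConj]
  simp only [Set.mem_ofPred_eq, and_imp]
  refine forall₂_congr fun T hT => ?_
  rcases T.eq_empty_or_nonempty with rfl | hne
  · simpa [Set.Nonempty] using M.Sig_nonempty w
  · rw [← truth, truth_neg, truth_boxplus]
    simp [support_iIdisj_neg_iff M hne (hχ T hT), hne]

end Cover

section CharacteristicFormulas

variable [Finite P]

noncomputable def atomsChar (A : Set P) : InqForm P :=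
  (iConj A atom).and (iConj Aᶜ fun p => (atom p).neg)

theorem truth_atomsChar_iff (M : InqModel P) (w : M.W) (A : Set P) :
    truth M w (atomsChar A) ↔ {p | w ∈ M.V p} = A := by
  simp only [atomsChar, truth, support_iConj, support_neg, support,
    Set.singleton_subset_iff, Set.mem_singleton_iff, forall_eq, Set.ext_iff, Set.mem_compl_iff]
  grind

theorem mdepth_atomsChar_le (A : Set P) (n : ℕ) : mdepth (atomsChar A) ≤ n := by
  simp [atomsChar, mdepth]

noncomputable def charForm : (n : ℕ) → InqType P n → InqForm P
  | 0, A => atomsChar A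
  | n + 1, (A, S) => (atomsChar A).and ((boxCover S (charForm n)).and (diamondCover S (charForm n)))

theorem mdepth_charForm_le (n : ℕ) (t : InqType P n) : mdepth (charForm n t) ≤ n := by
  induction n with
  | zero => exact mdepth_atomsChar_le t 0
  | succ n ih =>
    obtain ⟨A, S⟩ := t
    simp [charForm, mdepth_atomsChar_le, boxCover, diamondCover, mdepth, ih]

theorem truth_charForm_typeOf_iff (M M' : InqModel P) (n : ℕ) (w : M.W) (w' : M'.W) :
    truth M' w' (charForm n (M.typeOf n w)) ↔ M'.typeOf n w' = M.typeOf n w := by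
  induction n generalizing w w' with
  | zero => exact truth_atomsChar_iff M' w' _
  | succ n ih =>
    have hχ : ∀ T ∈ Set.image (M.typeOf n) '' M.Sig w, ∀ x ∈ T, ∀ v,
        truth M' v (charForm n x) ↔ M'.typeOf n v = x := by
      rintro _ ⟨s, -, rfl⟩ _ ⟨u, -, rfl⟩ v
      exact ih u v
    have hS : (Set.image (M.typeOf n) '' M.Sig w).Nonempty := (M.Sig_nonempty w).image _
    change _ ↔ (({p | w' ∈ M'.V p}, _) : Set P × Set (Set (InqType P n))) = ({p | w ∈ M.V p}, _)
    rw [Prod.mk.injEq, image_image_eq_iff (M'.isLowerSet_Sig w') (M.isLowerSet_Sig w)]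
    simp only [charForm, InqModel.typeOf, truth_and, truth_atomsChar_iff,
      truth_boxCover_iff M' hχ hS, truth_diamondCover_iff M' hχ, Set.forall_mem_image,
      Set.exists_mem_image]

end CharacteristicFormulas

/-- **Characteristic formulae for worlds**: over a finite set of atomic
propositions, every `~^n`-class of world-pointed models is defined by a
formula of modal depth at most `n`. -/
theorem characteristic_formula_world {P : Type} [Finite P]
    (M : InqModel P) (w : M.W) (n : ℕ) :
    ∃ χ : InqForm P, mdepth χ ≤ n ∧
      ∀ (M' : InqModel P) (w' : M'.W), truth M' w' χ ↔ NBisimW M' M n w' w :=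
  ⟨charForm n (M.typeOf n w), mdepth_charForm_le n _, fun M' w' => by
    rw [truth_charForm_typeOf_iff, nbisimW_iff_typeOf_eq]⟩
end

section
/- (Well-foundedness is bisimulation-invariant but not InqML-expressible) Call a world w of an inquisitive modal model M well-founded if there is no infinite sequence w = w_0, w_1, w_2, … with w_{i+1} ∈ σ(w_i) for all i. Then: (a) if M,w ~ M',w' then w is well-founded in M iff w' is well-founded in M'; (b) for every n ∈ ℕ there exist world-pointed inquisitive modal models M,w and M',w' with M,w ~^n M',w' such that w is well-founded in M but w' is not well-founded in M'; consequently (c) there is no InqML formula φ such that for every world-pointed inquisitive modal model M,w: M,w ⊨ φ iff w is well-founded. -/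
/-- A world `w` is well-founded if there is no infinite `σ`-path starting at `w`. -/
def WellFoundedWorld {P : Type} (M : InqModel P) (w : M.W) : Prop :=
  ¬ ∃ f : ℕ → M.W, f 0 = w ∧ ∀ i : ℕ, f (i + 1) ∈ M.sigma (f i)


/-! ### Auxiliary lemmas -/

section Aux

variable {P : Type}

lemma stateRel_mono {W W' : Type} {Z Z' : W → W' → Prop}
    (h : ∀ w w', Z w w' → Z' w w') {s : Set W} {s' : Set W'}
    (hr : StateRel Z s s') : StateRel Z' s s' :=
  ⟨fun w hw => let ⟨w', hw', hz⟩ := hr.1 w hw; ⟨w', hw', h _ _ hz⟩,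
   fun w' hw' => let ⟨w, hw, hz⟩ := hr.2 w' hw'; ⟨w, hw, h _ _ hz⟩⟩

lemma nbisim_atoms {M M' : InqModel P} :
    ∀ {n : ℕ} {w : M.W} {w' : M'.W}, NBisimW M M' n w w' →
      ∀ p, (w ∈ M.V p ↔ w' ∈ M'.V p)
  | 0, _, _, h => h
  | _+1, _, _, h => h.1

lemma nbisimW_succ (M M' : InqModel P) :
    ∀ (n : ℕ) (w : M.W) (w' : M'.W), NBisimW M M' (n+1) w w' → NBisimW M M' n w w'
  | 0, _, _, h => h.1
  | n+1, w, w', h =>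
    ⟨h.1,
     fun s hs =>
       let ⟨s', hs', hr⟩ := h.2.1 s hs
       ⟨s', hs', stateRel_mono (fun a b => nbisimW_succ M M' n a b) hr⟩,
     fun s' hs' =>
       let ⟨s, hs, hr⟩ := h.2.2 s' hs'
       ⟨s, hs, stateRel_mono (fun a b => nbisimW_succ M M' n a b) hr⟩⟩

lemma nbisimW_mono {M M' : InqModel P} {m n : ℕ} (h : m ≤ n) {w : M.W} {w' : M'.W}
    (hb : NBisimW M M' n w w') : NBisimW M M' m w w' := by
  induction h with
  | refl => exact hb
  | step h ih => exact ih (nbisimW_succ M M' _ _ _ hb)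

lemma nbisimS_mono {M M' : InqModel P} {m n : ℕ} (h : m ≤ n) {s : Set M.W} {s' : Set M'.W}
    (hb : NBisimS M M' n s s') : NBisimS M M' m s s' :=
  stateRel_mono (fun _ _ hz => nbisimW_mono h hz) hb

lemma nbisim_sigma {M M' : InqModel P} {n : ℕ} {w : M.W} {w' : M'.W}
    (h : NBisimW M M' (n+1) w w') : NBisimS M M' n (M.sigma w) (M'.sigma w') := by
  constructor
  · rintro v ⟨s, hs, hv⟩
    obtain ⟨s', hs', hr⟩ := h.2.1 s hs
    obtain ⟨v', hv', hz⟩ := hr.1 v hv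
    exact ⟨v', ⟨s', hs', hv'⟩, hz⟩
  · rintro v' ⟨s', hs', hv'⟩
    obtain ⟨s, hs, hr⟩ := h.2.2 s' hs'
    obtain ⟨v, hv, hz⟩ := hr.2 v' hv'
    exact ⟨v, ⟨s, hs, hv⟩, hz⟩

lemma nbisimS_singleton {M M' : InqModel P} {n : ℕ} {w : M.W} {w' : M'.W}
    (h : NBisimW M M' n w w') : NBisimS M M' n {w} {w'} :=
  ⟨fun v hv => ⟨w', rfl, by rwa [Set.mem_singleton_iff.mp hv]⟩,
   fun v' hv' => ⟨w, rfl, by rwa [Set.mem_singleton_iff.mp hv']⟩⟩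

/-- Adequacy: support is invariant under `n`-bisimilarity for `n = mdepth φ`. -/
lemma support_iff {P : Type} (φ : InqForm P) :
    ∀ (M M' : InqModel P) (s : Set M.W) (s' : Set M'.W),
      NBisimS M M' (mdepth φ) s s' → (support M φ s ↔ support M' φ s') := by
  induction φ with
  | atom p =>
    intro M M' s s' h
    constructor
    · intro hsub w' hw'
      obtain ⟨w, hw, hz⟩ := h.2 w' hw'
      exact (nbisim_atoms hz p).mp (hsub hw)
    · intro hsub w hw
      obtain ⟨w', hw', hz⟩ := h.1 w hw
      exact (nbisim_atoms hz p).mpr (hsub hw')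
  | bot =>
    intro M M' s s' h
    simp only [support]
    constructor
    · intro hs
      rw [Set.eq_empty_iff_forall_notMem]
      intro w' hw'
      obtain ⟨w, hw, _⟩ := h.2 w' hw'
      simp [hs] at hw
    · intro hs
      rw [Set.eq_empty_iff_forall_notMem]
      intro w hw
      obtain ⟨w', hw', _⟩ := h.1 w hw
      simp [hs] at hw'
  | and φ ψ ihφ ihψ =>
    intro M M' s s' h
    exact and_congr
      (ihφ M M' s s' (nbisimS_mono (le_max_left _ _) h))
      (ihψ M M' s s' (nbisimS_mono (le_max_right _ _) h))
  | idisj φ ψ ihφ ihψ =>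
    intro M M' s s' h
    exact or_congr
      (ihφ M M' s s' (nbisimS_mono (le_max_left _ _) h))
      (ihψ M M' s s' (nbisimS_mono (le_max_right _ _) h))
  | impl φ ψ ihφ ihψ =>
    intro M M' s s' h
    set n := mdepth (InqForm.impl φ ψ) with hn
    constructor
    · intro hsup t' ht' hφ'
      set t : Set M.W := {w ∈ s | ∃ w' ∈ t', NBisimW M M' n w w'} with htdef
      have hts : t ⊆ s := fun w hw => hw.1
      have hrel : NBisimS M M' n t t' := by
        constructor
        · rintro w ⟨_, w', hw', hz⟩
          exact ⟨w', hw', hz⟩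
        · intro w' hw'
          obtain ⟨w, hw, hz⟩ := h.2 w' (ht' hw')
          exact ⟨w, ⟨hw, w', hw', hz⟩, hz⟩
      have hφt : support M φ t :=
        (ihφ M M' t t' (nbisimS_mono (le_max_left _ _) hrel)).mpr hφ'
      exact (ihψ M M' t t' (nbisimS_mono (le_max_right _ _) hrel)).mp
        (hsup t hts hφt)
    · intro hsup t hts hφt
      set t' : Set M'.W := {w' ∈ s' | ∃ w ∈ t, NBisimW M M' n w w'} with htdef
      have hts' : t' ⊆ s' := fun w' hw' => hw'.1
      have hrel : NBisimS M M' n t t' := by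
        constructor
        · intro w hw
          obtain ⟨w', hw', hz⟩ := h.1 w (hts hw)
          exact ⟨w', ⟨hw', w, hw, hz⟩, hz⟩
        · rintro w' ⟨_, w, hw, hz⟩
          exact ⟨w, hw, hz⟩
      have hφ' : support M' φ t' :=
        (ihφ M M' t t' (nbisimS_mono (le_max_left _ _) hrel)).mp hφt
      exact (ihψ M M' t t' (nbisimS_mono (le_max_right _ _) hrel)).mpr
        (hsup t' hts' hφ')
  | box φ ih =>
    intro M M' s s' h
    constructor
    · intro hsup w' hw'
      obtain ⟨w, hw, hz⟩ := h.2 w' hw'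
      exact (ih M M' _ _ (nbisim_sigma hz)).mp (hsup w hw)
    · intro hsup w hw
      obtain ⟨w', hw', hz⟩ := h.1 w hw
      exact (ih M M' _ _ (nbisim_sigma hz)).mpr (hsup w' hw')
  | boxplus φ ih =>
    intro M M' s s' h
    constructor
    · intro hsup w' hw' t' ht'
      obtain ⟨w, hw, hz⟩ := h.2 w' hw'
      obtain ⟨t, ht, hr⟩ := hz.2.2 t' ht'
      exact (ih M M' t t' hr).mp (hsup w hw t ht)
    · intro hsup w hw t ht
      obtain ⟨w', hw', hz⟩ := h.1 w hw
      obtain ⟨t', ht', hr⟩ := hz.2.1 t ht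
      exact (ih M M' t t' hr).mpr (hsup w' hw' t' ht')

/-! ### Part (a): lifting infinite paths along a bisimulation -/

lemma bisim_step {M M' : InqModel P} {Z : M.W → M'.W → Prop}
    (hZ : IsBisimulation M M' Z) {v : M.W} {v' : M'.W} (h : Z v v')
    {u' : M'.W} (hu' : u' ∈ M'.sigma v') : ∃ u, u ∈ M.sigma v ∧ Z u u' := by
  obtain ⟨s', hs', hu's'⟩ := hu'
  obtain ⟨s, hs, hr⟩ := ((hZ v v' h).2.2) s' hs'
  obtain ⟨u, hu, hz⟩ := hr.2 u' hu's'
  exact ⟨u, ⟨s, hs, hu⟩, hz⟩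

noncomputable def liftSeq (M M' : InqModel P) (Z : M.W → M'.W → Prop)
    (hZ : IsBisimulation M M' Z) (f' : ℕ → M'.W)
    (hstep : ∀ i, f' (i+1) ∈ M'.sigma (f' i)) (w : M.W) (h0 : Z w (f' 0)) :
    (i : ℕ) → {v : M.W // Z v (f' i)}
  | 0 => ⟨w, h0⟩
  | i + 1 =>
      ⟨(bisim_step hZ (liftSeq M M' Z hZ f' hstep w h0 i).2 (hstep i)).choose,
       (bisim_step hZ (liftSeq M M' Z hZ f' hstep w h0 i).2 (hstep i)).choose_spec.2⟩

lemma lift_not_wf {M M' : InqModel P} {Z : M.W → M'.W → Prop}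
    (hZ : IsBisimulation M M' Z) {w : M.W} {w' : M'.W} (h : Z w w')
    (hnwf : ¬ WellFoundedWorld M' w') : ¬ WellFoundedWorld M w := by
  obtain ⟨f', h0, hstep⟩ := not_not.mp hnwf
  have h0' : Z w (f' 0) := h0 ▸ h
  intro hwf
  refine hwf ⟨fun i => (liftSeq M M' Z hZ f' hstep w h0' i).1, rfl, fun i => ?_⟩
  show (liftSeq M M' Z hZ f' hstep w h0' (i+1)).1 ∈ _
  simp only [liftSeq]
  exact (bisim_step hZ (liftSeq M M' Z hZ f' hstep w h0' i).2 (hstep i)).choose_spec.1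

lemma bisim_symm {M M' : InqModel P} {Z : M.W → M'.W → Prop}
    (hZ : IsBisimulation M M' Z) : IsBisimulation M' M (fun w' w => Z w w') := by
  intro w' w h
  obtain ⟨ha, hb, hc⟩ := hZ w w' h
  refine ⟨fun p => (ha p).symm, ?_, ?_⟩
  · intro s' hs'
    obtain ⟨s, hs, hr⟩ := hc s' hs'
    exact ⟨s, hs, hr.2, hr.1⟩
  · intro s hs
    obtain ⟨s', hs', hr⟩ := hb s hs
    exact ⟨s', hs', hr.2, hr.1⟩

/-! ### Part (b): concrete models -/

/-- A decreasing chain on `ℕ`: `σ(k+1) = {k}`, `σ(0) = ∅`. -/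
@[reducible] def chainModel (P : Type) : InqModel P where
  W := ℕ
  Sig := fun k => {s | ∀ x ∈ s, x + 1 = k}
  Sig_nonempty := fun _ => ⟨∅, fun x hx => absurd hx (Set.notMem_empty x)⟩
  Sig_downward := fun _ _ hs _ hts x hx => hs x (hts hx)
  V := fun _ => ∅

/-- A single reflexive world. -/
@[reducible] def loopModel (P : Type) : InqModel P where
  W := Unit
  Sig := fun _ => Set.univ
  Sig_nonempty := fun _ => ⟨∅, trivial⟩
  Sig_downward := fun _ _ _ _ _ => trivial
  V := fun _ => ∅

lemma chain_sigma (P : Type) (k : ℕ) :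
    (chainModel P).sigma k = {x | x + 1 = k} := by
  ext x
  constructor
  · rintro ⟨s, hs, hx⟩; exact hs x hx
  · intro hx
    exact ⟨{x}, fun y hy => by rw [Set.mem_singleton_iff.mp hy]; exact hx, rfl⟩

lemma chain_wf (P : Type) (k : ℕ) : WellFoundedWorld (chainModel P) k := by
  rintro ⟨f, _, hstep⟩
  set g : ℕ → ℕ := fun i => f i with hg
  have hdec : ∀ i, g (i+1) + 1 = g i := by
    intro i
    have h := hstep i
    rw [chain_sigma] at h
    exact h
  have key : ∀ i, g i + i = g 0 := by
    intro i
    induction i with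
    | zero => rfl
    | succ i ih =>
      have := hdec i
      omega
  have := key (g 0 + 1)
  omega

lemma loop_not_wf (P : Type) : ¬ WellFoundedWorld (loopModel P) () := by
  intro h
  exact h ⟨fun _ => (), rfl, fun _ => ⟨{()}, trivial, rfl⟩⟩

lemma chain_loop_nbisim (P : Type) :
    ∀ (n k : ℕ), n ≤ k → NBisimW (chainModel P) (loopModel P) n k () := by
  intro n
  induction n with
  | zero =>
    intro k _ p
    simp [chainModel, loopModel]
  | succ n ih =>
    intro k hk
    refine ⟨fun p => by simp [chainModel, loopModel], ?_, ?_⟩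
    · intro s hs
      refine ⟨(fun _ => ()) '' s, trivial, ?_, ?_⟩
      · intro x hx
        refine ⟨(), ⟨x, hx, rfl⟩, ?_⟩
        have hxk : x + 1 = k := hs x hx
        exact ih x (Nat.le_of_succ_le_succ (le_of_le_of_eq hk hxk.symm))
      · rintro u ⟨x, hx, rfl⟩
        refine ⟨x, hx, ?_⟩
        have hxk : x + 1 = k := hs x hx
        exact ih x (Nat.le_of_succ_le_succ (le_of_le_of_eq hk hxk.symm))
    · intro s' _
      by_cases hne : s'.Nonempty
      · obtain ⟨u, hu⟩ := hne
        refine ⟨{k-1}, ?_, ?_, ?_⟩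
        · intro x hx
          rw [Set.mem_singleton_iff.mp hx]
          omega
        · intro x hx
          rw [Set.mem_singleton_iff.mp hx]
          exact ⟨u, hu, ih (k-1) (by omega)⟩
        · intro u' _
          exact ⟨k-1, rfl, ih (k-1) (by omega)⟩
      · refine ⟨∅, fun x hx => absurd hx (Set.notMem_empty x), ?_, ?_⟩
        · intro x hx; exact absurd hx (Set.notMem_empty x)
        · intro u' hu'; exact absurd ⟨u', hu'⟩ hne

lemma partB (P : Type) (n : ℕ) :
    ∃ (M M' : InqModel P) (w : M.W) (w' : M'.W),
      NBisimW M M' n w w' ∧ WellFoundedWorld M w ∧ ¬ WellFoundedWorld M' w' :=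
  ⟨chainModel P, loopModel P, n, (),
    chain_loop_nbisim P n n le_rfl, chain_wf P n, loop_not_wf P⟩

end Aux

/-- **Well-foundedness is bisimulation-invariant but not InqML-expressible**:
(a) well-foundedness is invariant under full bisimilarity; (b) for each `n` it is
not invariant under `~^n`; hence (c) no InqML formula defines it. -/
theorem wellfounded_not_expressible {P : Type} :
    (∀ (M M' : InqModel P) (w : M.W) (w' : M'.W), BisimW M M' w w' →
      (WellFoundedWorld M w ↔ WellFoundedWorld M' w')) ∧
    (∀ n : ℕ, ∃ (M M' : InqModel P) (w : M.W) (w' : M'.W),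
      NBisimW M M' n w w' ∧ WellFoundedWorld M w ∧ ¬ WellFoundedWorld M' w') ∧
    (¬ ∃ φ : InqForm P, ∀ (M : InqModel P) (w : M.W),
      truth M w φ ↔ WellFoundedWorld M w) := by
  constructor
  · intro M M' w w' ⟨Z, hZ, hz⟩
    constructor
    · intro hwf
      by_contra hnwf'
      exact lift_not_wf hZ hz hnwf' hwf
    · intro hwf'
      by_contra hnwf
      exact lift_not_wf (bisim_symm hZ) hz hnwf hwf'
  refine ⟨partB P, ?_⟩
  rintro ⟨φ, hφ⟩
  obtain ⟨M, M', w, w', hb, hwf, hnwf⟩ := partB P (mdepth φ)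
  have h1 : truth M w φ := (hφ M w).mpr hwf
  have h2 : truth M' w' φ :=
    (support_iff φ M M' {w} {w'} (nbisimS_singleton hb)).mp h1
  exact hnwf ((hφ M' w').mp h2)
end
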